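/- arXiv:2211.07935 — 2 statements merged into one kernel-verified Lean document; each statement's English description precedes it below -/
import Mathlib

section
/- In ℝ² with the max norm, for any α, β ∈ (0,1) with α+β < 1, the vectors u = (1,1) and v = (−1/(2α), 1/(2β)) satisfy ρ_{α,β}(u,v) = 0 (i.e., u ⊥_{ρ_{α,β}} v), while ρ₊(u,v) = 1/(2β) ≠ 0, ρ₋(u,v) = −1/(2α) ≠ 0, and (ρ₊(u,v)+ρ₋(u,v))/2 ≠ 0 when α ≠ β. -/
noncomputable def rhoP {X : Type*} [NormedAddCommGroup X] [NormedSpace ℝ X] (u v : X) : ℝ :=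
  Filter.limUnder (nhdsWithin (0:ℝ) (Set.Ioi 0)) (fun t : ℝ => (‖u + t • v‖^2 - ‖u‖^2) / (2*t))

noncomputable def rhoM {X : Type*} [NormedAddCommGroup X] [NormedSpace ℝ X] (u v : X) : ℝ :=
  Filter.limUnder (nhdsWithin (0:ℝ) (Set.Iio 0)) (fun t : ℝ => (‖u + t • v‖^2 - ‖u‖^2) / (2*t))

noncomputable def rhoAB {X : Type*} [NormedAddCommGroup X] [NormedSpace ℝ X]
    (α β : ℝ) (u v : X) : ℝ := α * rhoM u v + β * rhoP u v

/-! `ρ±(u, v)` is `‖u‖` times the one-sided derivative of `t ↦ ‖u + t • v‖` at `0`. For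
`u = (1, 1)` and small `t` the max norm is affine on each side of `0`:
`‖u + t • v‖ = 1 + t * max v.1 v.2` for `t ≥ 0` and `1 + t * min v.1 v.2` for `t ≤ 0`, so
`ρ₊(u, v) = max v.1 v.2 = 1/(2β)` and `ρ₋(u, v) = min v.1 v.2 = -1/(2α)`. -/

open Filter Set Topology

section OneSided

variable {X : Type*} [NormedAddCommGroup X] [NormedSpace ℝ X] {u v : X} {c : ℝ}

theorem limUnder_normSq_slope_eq {s : Set ℝ} (hs : (0 : ℝ) ∉ s) [(𝓝[s] (0 : ℝ)).NeBot]
    (h : HasDerivWithinAt (fun t : ℝ => ‖u + t • v‖) c s 0) :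
    limUnder (𝓝[s] (0 : ℝ)) (fun t : ℝ => (‖u + t • v‖ ^ 2 - ‖u‖ ^ 2) / (2 * t)) = ‖u‖ * c := by
  have hsq : HasDerivWithinAt (fun t : ℝ => ‖u + t • v‖ ^ 2) (2 * ‖u‖ * c) s 0 := by
    simpa using h.fun_pow 2
  have hslope := ((hasDerivWithinAt_iff_tendsto_slope' hs).mp hsq).div_const 2
  refine Tendsto.limUnder_eq ?_
  convert hslope using 2 with t
  · simp [slope_def_field, div_div, mul_comm]
  · ring

theorem rhoP_eq_of_hasDerivWithinAt (h : HasDerivWithinAt (fun t : ℝ => ‖u + t • v‖) c (Ioi 0) 0) :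
    rhoP u v = ‖u‖ * c :=
  limUnder_normSq_slope_eq self_notMem_Ioi h

theorem rhoM_eq_of_hasDerivWithinAt (h : HasDerivWithinAt (fun t : ℝ => ‖u + t • v‖) c (Iio 0) 0) :
    rhoM u v = ‖u‖ * c :=
  limUnder_normSq_slope_eq self_notMem_Iio h

end OneSided

theorem norm_one_one_add_smul (v : ℝ × ℝ) {t : ℝ} (ht : |t| * ‖v‖ ≤ 1) :
    ‖((1, 1) : ℝ × ℝ) + t • v‖ = 1 + max (t * v.1) (t * v.2) := by
  have h₁ : |t * v.1| ≤ 1 := by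
    rw [abs_mul]; exact (mul_le_mul_of_nonneg_left (norm_fst_le v) (abs_nonneg t)).trans ht
  have h₂ : |t * v.2| ≤ 1 := by
    rw [abs_mul]; exact (mul_le_mul_of_nonneg_left (norm_snd_le v) (abs_nonneg t)).trans ht
  simp only [Prod.norm_def, Prod.fst_add, Prod.snd_add, Prod.smul_fst, Prod.smul_snd,
    smul_eq_mul, Real.norm_eq_abs]
  rw [abs_of_nonneg (by linarith [neg_abs_le (t * v.1)]),
    abs_of_nonneg (by linarith [neg_abs_le (t * v.2)]), max_add_add_left]

theorem eventually_abs_mul_norm_le_one (v : ℝ × ℝ) : ∀ᶠ t in 𝓝 (0 : ℝ), |t| * ‖v‖ ≤ 1 := by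
  have h : Tendsto (fun t : ℝ => |t| * ‖v‖) (𝓝 0) (𝓝 0) := by
    simpa using (continuous_abs.mul continuous_const).tendsto (0 : ℝ) (f := fun t : ℝ => |t| * ‖v‖)
  exact h.eventually (eventually_le_nhds zero_lt_one)

theorem hasDerivWithinAt_of_eventuallyEq_one_add_mul {f : ℝ → ℝ} {s : Set ℝ} {c : ℝ}
    (hf : ∀ᶠ t in 𝓝[s] 0, f t = 1 + t * c) (h0 : f 0 = 1) : HasDerivWithinAt f c s 0 := by
  have hlin : HasDerivWithinAt (fun t : ℝ => 1 + t * c) c s 0 := by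
    simpa using ((hasDerivAt_id (0 : ℝ)).mul_const c).const_add 1 |>.hasDerivWithinAt
  exact hlin.congr_of_eventuallyEq hf (by simp [h0])

theorem norm_one_one : ‖((1, 1) : ℝ × ℝ)‖ = 1 := by simp [Prod.norm_def]

theorem rhoP_one_one (v : ℝ × ℝ) : rhoP ((1, 1) : ℝ × ℝ) v = max v.1 v.2 := by
  rw [rhoP_eq_of_hasDerivWithinAt (c := max v.1 v.2), norm_one_one, one_mul]
  refine hasDerivWithinAt_of_eventuallyEq_one_add_mul ?_ (by simp)
  filter_upwards [nhdsWithin_le_nhds (eventually_abs_mul_norm_le_one v), self_mem_nhdsWithin]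
    with t ht (htpos : 0 < t)
  rw [norm_one_one_add_smul v ht, mul_max_of_nonneg _ _ htpos.le]

theorem rhoM_one_one (v : ℝ × ℝ) : rhoM ((1, 1) : ℝ × ℝ) v = min v.1 v.2 := by
  rw [rhoM_eq_of_hasDerivWithinAt (c := min v.1 v.2), norm_one_one, one_mul]
  refine hasDerivWithinAt_of_eventuallyEq_one_add_mul ?_ (by simp)
  filter_upwards [nhdsWithin_le_nhds (eventually_abs_mul_norm_le_one v), self_mem_nhdsWithin]
    with t ht (htneg : t < 0)
  have hmin : t * min v.1 v.2 = max (t * v.1) (t * v.2) := smul_min_of_nonpos htneg.le v.1 v.2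
  rw [norm_one_one_add_smul v ht, hmin]

theorem stmt_7_general (α β : ℝ) (hα : α ∈ Set.Ioo (0:ℝ) 1) (hβ : β ∈ Set.Ioo (0:ℝ) 1) :
    let u : ℝ × ℝ := (1, 1)
    let v : ℝ × ℝ := (-1/(2*α), 1/(2*β))
    rhoAB α β u v = 0 ∧
    rhoP u v = 1/(2*β) ∧ rhoM u v = -1/(2*α) ∧
    rhoP u v ≠ 0 ∧ rhoM u v ≠ 0 ∧
    (α ≠ β → (rhoM u v + rhoP u v) / 2 ≠ 0) := by
  intro u v
  have hα₀ : 0 < α := hα.1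
  have hβ₀ : 0 < β := hβ.1
  have hsign : -1 / (2 * α) ≤ 1 / (2 * β) := by
    rw [neg_div]; exact (neg_nonpos.mpr (by positivity)).trans (by positivity)
  have hP : rhoP u v = 1 / (2 * β) := (rhoP_one_one v).trans (max_eq_right hsign)
  have hM : rhoM u v = -1 / (2 * α) := (rhoM_one_one v).trans (min_eq_left hsign)
  refine ⟨?_, hP, hM, by rw [hP]; positivity,
    by rw [hM]; exact div_ne_zero (by norm_num) (by positivity), fun hne => ?_⟩
  · rw [rhoAB, hP, hM]; field_simp; ring
  · rw [hM, hP]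
    intro h
    field_simp at h
    exact hne (by linarith)

theorem stmt_7 (α β : ℝ) (hα : α ∈ Set.Ioo (0:ℝ) 1) (hβ : β ∈ Set.Ioo (0:ℝ) 1)
    (hab1 : α + β < 1) :
    let u : ℝ × ℝ := (1, 1)
    let v : ℝ × ℝ := (-1/(2*α), 1/(2*β))
    rhoAB α β u v = 0 ∧
    rhoP u v = 1/(2*β) ∧ rhoM u v = -1/(2*α) ∧
    rhoP u v ≠ 0 ∧ rhoM u v ≠ 0 ∧
    (α ≠ β → (rhoM u v + rhoP u v) / 2 ≠ 0) :=
  stmt_7_general α β hα hβ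
end

section
/- Let X be a real normed linear space and α, β ∈ [0,1), α ≠ β, 0 < α+β < 1. Then ρ-orthogonality (vanishing of (ρ₋+ρ₊)/2) coincides with ρ_{α,β}-orthogonality on X if and only if X is smooth. -/
/-!
For fixed `u`, `t ↦ ‖u + t • v‖ ^ 2` is convex, so `rhoP u v` and `rhoM u v` are half its right and
left derivatives at `0`; in particular the limits exist, and `rhoM u v = -rhoP u (-v)`. Writing
`u + t • (s • u + v) = (1 + t * s) • (u + τ • v)` with `τ = t / (1 + t * s)` shows that replacing `v`
by `s • u + v` adds `s * ‖u‖ ^ 2` to both `rhoP u v` and `rhoM u v`. For `u ≠ 0` choose `s` so that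
`s • u + v` is `ρ`-orthogonal to `u`; `ρ_{α,β}`-orthogonality then reads
`(α - β) (ρ₋(u,v) - ρ₊(u,v)) = 0`. Conversely, in a smooth space `ρ_{α,β} = (α + β) ρ`.
-/

open Set Filter Topology

section

variable {X : Type*} [NormedAddCommGroup X] [NormedSpace ℝ X]

noncomputable def normSqDiffQuot (u v : X) (t : ℝ) : ℝ := (‖u + t • v‖ ^ 2 - ‖u‖ ^ 2) / (2 * t)

lemma convexOn_norm_add_smul_sq (u v : X) : ConvexOn ℝ univ (fun t : ℝ => ‖u + t • v‖ ^ 2) := by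
  have hnorm : ConvexOn ℝ univ (fun t : ℝ => ‖u + t • v‖) := by
    simpa [Function.comp_def, AffineMap.lineMap_apply, add_comm] using
      convexOn_univ_norm.comp_affineMap (AffineMap.lineMap u (u + v) : ℝ →ᵃ[ℝ] X)
  exact hnorm.pow (fun _ _ => norm_nonneg _) 2

lemma normSqDiffQuot_eq_slope (u v : X) :
    normSqDiffQuot u v = fun t => slope (fun t : ℝ => ‖u + t • v‖ ^ 2) 0 t / 2 := by
  ext t
  simp [normSqDiffQuot, slope_def_field, div_div, mul_comm]

lemma normSqDiffQuot_neg (u v : X) (t : ℝ) :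
    normSqDiffQuot u (-v) (-t) = -normSqDiffQuot u v t := by
  simp only [normSqDiffQuot, neg_smul_neg, mul_neg, div_neg]

lemma tendsto_normSqDiffQuot_rhoP (u v : X) :
    Tendsto (normSqDiffQuot u v) (𝓝[>] 0) (𝓝 (rhoP u v)) := by
  have hderiv := (convexOn_norm_add_smul_sq u v).hasDerivWithinAt_rightDeriv_of_mem_interior
    (x := 0) (by simp)
  rw [hasDerivWithinAt_iff_tendsto_slope, sdiff_singleton_eq_self self_notMem_Ioi] at hderiv
  exact tendsto_nhds_limUnder ⟨_, normSqDiffQuot_eq_slope u v ▸ hderiv.div_const 2⟩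

lemma rhoM_eq_neg_rhoP_neg (u v : X) : rhoM u v = -rhoP u (-v) := by
  have h := ((tendsto_normSqDiffQuot_rhoP u (-v)).comp
    (neg_zero (G := ℝ) ▸ tendsto_neg_nhdsLT_neg)).neg
  show limUnder _ (normSqDiffQuot u v) = _
  refine h.congr (fun t => ?_) |>.limUnder_eq
  simp [normSqDiffQuot_neg]

lemma normSqDiffQuot_smul_add (u v : X) (s : ℝ) {t : ℝ} (ht : t ≠ 0) (hc : 1 + t * s ≠ 0) :
    normSqDiffQuot u (s • u + v) t =
      (1 + t * s) * normSqDiffQuot u v (t / (1 + t * s)) + (s + t * s ^ 2 / 2) * ‖u‖ ^ 2 := by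
  have hscale : u + t • (s • u + v) = (1 + t * s) • (u + (t / (1 + t * s)) • v) := by
    rw [smul_add, smul_add, smul_smul, smul_smul, mul_div_cancel₀ _ hc, add_smul, one_smul]
    abel
  rw [normSqDiffQuot, normSqDiffQuot, hscale, norm_smul, Real.norm_eq_abs, mul_pow, sq_abs]
  field_simp
  ring

lemma rhoP_smul_add (u v : X) (s : ℝ) : rhoP u (s • u + v) = s * ‖u‖ ^ 2 + rhoP u v := by
  have hc0 : Tendsto (fun t : ℝ => 1 + t * s) (𝓝 0) (𝓝 1) :=
    Continuous.tendsto' (by fun_prop) 0 1 (by simp)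
  have hc := hc0.mono_left (nhdsWithin_le_nhds (s := Ioi 0))
  have hcpos : ∀ᶠ t in 𝓝[>] 0, 0 < 1 + t * s := hc.eventually (eventually_gt_nhds one_pos)
  have hτ : Tendsto (fun t : ℝ => t / (1 + t * s)) (𝓝[>] 0) (𝓝[>] 0) := by
    refine tendsto_nhdsWithin_iff.mpr ⟨?_, ?_⟩
    · simpa [Pi.div_def] using (tendsto_id.div hc0 one_ne_zero).mono_left nhdsWithin_le_nhds
    · filter_upwards [hcpos, self_mem_nhdsWithin] with t hct ht using div_pos ht hct
  have hlin : Tendsto (fun t : ℝ => s + t * s ^ 2 / 2) (𝓝[>] 0) (𝓝 s) :=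
    (Continuous.tendsto' (by fun_prop) 0 s (by simp)).mono_left nhdsWithin_le_nhds
  have hlim := (hc.mul ((tendsto_normSqDiffQuot_rhoP u v).comp hτ)).add (hlin.mul_const (‖u‖ ^ 2))
  refine (hlim.congr' ?_).limUnder_eq.trans (by ring)
  filter_upwards [hcpos, self_mem_nhdsWithin] with t hct ht
  exact (normSqDiffQuot_smul_add u v s ht.ne' hct.ne').symm

lemma rhoM_smul_add (u v : X) (s : ℝ) : rhoM u (s • u + v) = s * ‖u‖ ^ 2 + rhoM u v := by
  rw [rhoM_eq_neg_rhoP_neg, rhoM_eq_neg_rhoP_neg, neg_add, ← neg_smul, rhoP_smul_add]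
  ring

lemma rhoP_zero_left (v : X) : rhoP 0 v = 0 := by
  have hlin : Tendsto (fun t : ℝ => t * ‖v‖ ^ 2 / 2) (𝓝[>] 0) (𝓝 0) :=
    (Continuous.tendsto' (by fun_prop) 0 0 (by simp)).mono_left nhdsWithin_le_nhds
  refine (hlin.congr' ?_).limUnder_eq
  filter_upwards [self_mem_nhdsWithin] with t ht
  simp only [zero_add, norm_smul, norm_zero, Real.norm_eq_abs, mul_pow, sq_abs, zero_pow two_ne_zero,
    sub_zero]
  field_simp

lemma rhoM_zero_left (v : X) : rhoM 0 v = 0 := by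
  rw [rhoM_eq_neg_rhoP_neg, rhoP_zero_left, neg_zero]

lemma rhoM_eq_rhoP_of_forall_rhoAB_eq_zero {α β : ℝ} (hne : α ≠ β) {u : X}
    (h : ∀ w : X, (rhoM u w + rhoP u w) / 2 = 0 → rhoAB α β u w = 0) (v : X) :
    rhoM u v = rhoP u v := by
  rcases eq_or_ne u 0 with rfl | hu
  · rw [rhoM_zero_left, rhoP_zero_left]
  obtain ⟨s, hs⟩ : ∃ s : ℝ, s * ‖u‖ ^ 2 = -(rhoM u v + rhoP u v) / 2 :=
    ⟨-(rhoM u v + rhoP u v) / (2 * ‖u‖ ^ 2), by field_simp [norm_ne_zero_iff.mpr hu]⟩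
  have hAB := h (s • u + v) (by rw [rhoM_smul_add, rhoP_smul_add, hs]; ring)
  rw [rhoAB, rhoM_smul_add, rhoP_smul_add, hs] at hAB
  have hprod : (α - β) * (rhoM u v - rhoP u v) = 0 := by linear_combination 2 * hAB
  exact sub_eq_zero.mp ((mul_eq_zero.mp hprod).resolve_left (sub_ne_zero.mpr hne))

end

theorem stmt_9_general {X : Type*} [NormedAddCommGroup X] [NormedSpace ℝ X]
    (α β : ℝ)
    (hne : α ≠ β) (hab : 0 < α + β) :
    (∀ u v : X, (rhoM u v + rhoP u v) / 2 = 0 ↔ rhoAB α β u v = 0) ↔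
    (∀ u v : X, rhoM u v = rhoP u v) := by
  refine ⟨fun H u => rhoM_eq_rhoP_of_forall_rhoAB_eq_zero hne fun w => (H u w).mp,
    fun H u v => ?_⟩
  rw [rhoAB, H, ← add_mul, add_self_div_two, mul_eq_zero, or_iff_right hab.ne']

theorem stmt_9 {X : Type*} [NormedAddCommGroup X] [NormedSpace ℝ X]
    (α β : ℝ) (hα : α ∈ Set.Ico (0:ℝ) 1) (hβ : β ∈ Set.Ico (0:ℝ) 1)
    (hne : α ≠ β) (hab : 0 < α + β) (hab1 : α + β < 1) :
    (∀ u v : X, (rhoM u v + rhoP u v) / 2 = 0 ↔ rhoAB α β u v = 0) ↔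
    (∀ u v : X, rhoM u v = rhoP u v) :=
  stmt_9_general α β hne hab
end
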